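/- Let a < b be real numbers, c ∈ ℝ, g ∈ L^1(a,b), and let u(x) := c + ∫_a^x g(t) dt for x ∈ [a,b]. For s ∈ (0,1) the Riemann–Liouville derivative is D_{a+}^s u(x) = c (x−a)^{−s}/Γ(1−s) + I_{a+}^{1−s}[g](x) for a.e. x ∈ (a,b). Then D_{a+}^s u converges weakly-* in the sense of Radon measures on [a,b] to u'·dx + u(a)·δ_a as s → 1−; that is, for every continuous function φ : [a,b] → ℝ, ∫_a^b φ(x) D_{a+}^s u(x) dx → ∫_a^b φ(x) g(x) dx + c·φ(a) as s → 1−. -/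

import Mathlib

/-!
Write `σ = 1 - s` and `u = c + ∫_a^· g`. Fubini on the triangle `a < r < t < x` gives the
semigroup identities `I^σ [∫_a^· g] = I^(σ+1) g = ∫_a^· I^σ g`, hence
`I^σ u (x) = c (x - a)^σ / Γ(σ + 1) + ∫_a^x I^σ g`, and the Lebesgue differentiation theorem
yields the formula for `D^s u`.

The same Fubini argument moves the fractional integral onto the test function:
`∫ φ D^s u = c I_{b-}^σ φ (a) + ∫ g I_{b-}^σ φ`, where
`I_{b-}^σ φ (r) = Γ(σ)⁻¹ ∫_r^b φ(x) (x - r)^(σ-1) dx` is the right Riemann–Liouville integral.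
As `σ → 0+` the kernels `σ (x - r)^(σ-1)` on `(r, b)` are peak functions at `r` of mass
`(b - r)^σ → 1`, so `I_{b-}^σ φ → φ` on `[a, b)` with a uniform bound, and dominated
convergence concludes.
-/

open MeasureTheory Set Filter ENNReal

/-- The left Riemann–Liouville fractional integral of order `σ` with base point `a`. -/
noncomputable def RLint (a σ : ℝ) (u : ℝ → ℝ) (x : ℝ) : ℝ :=
  (Real.Gamma σ)⁻¹ * ∫ t in a..x, u t * (x - t) ^ (σ - 1)

open Topology

noncomputable def RLintRight (b σ : ℝ) (u : ℝ → ℝ) (x : ℝ) : ℝ :=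
  (Real.Gamma σ)⁻¹ * ∫ t in Ioo x b, u t * (t - x) ^ (σ - 1)

section RpowIntegrals

variable {a b p σ : ℝ}

lemma integrableOn_sub_rpow (hp : -1 < p) : IntegrableOn (fun x => (x - a) ^ p) (Ioo a b) := by
  have h : IntervalIntegrable (fun x => (x - a) ^ p) volume a b := by
    simpa using
      (intervalIntegral.intervalIntegrable_rpow' (a := a - a) (b := b - a) hp).comp_sub_right a
  exact (intervalIntegrable_iff.1 h).mono_set (Ioo_subset_Ioc_self.trans Ioc_subset_uIoc)

lemma integrableOn_rpow_sub (hp : -1 < p) : IntegrableOn (fun x => (b - x) ^ p) (Ioo a b) := by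
  have h : IntervalIntegrable (fun x => (b - x) ^ p) volume a b := by
    simpa using
      ((intervalIntegral.intervalIntegrable_rpow' (a := b - b) (b := b - a) hp).comp_sub_left
        b).symm
  exact (intervalIntegrable_iff.1 h).mono_set (Ioo_subset_Ioc_self.trans Ioc_subset_uIoc)

lemma setIntegral_sub_rpow (hab : a ≤ b) (hσ : 0 < σ) :
    ∫ x in Ioo a b, (x - a) ^ (σ - 1) = (b - a) ^ σ / σ := by
  rw [← integral_Ioc_eq_integral_Ioo, ← intervalIntegral.integral_of_le hab,
    intervalIntegral.integral_comp_sub_right (fun x => x ^ (σ - 1)),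
    integral_rpow (Or.inl (by linarith))]
  simp [Real.zero_rpow hσ.ne']

lemma setIntegral_rpow_sub (hab : a ≤ b) (hσ : 0 < σ) :
    ∫ x in Ioo a b, (b - x) ^ (σ - 1) = (b - a) ^ σ / σ := by
  rw [← integral_Ioc_eq_integral_Ioo, ← intervalIntegral.integral_of_le hab,
    intervalIntegral.integral_comp_sub_left (fun x => x ^ (σ - 1)),
    integral_rpow (Or.inl (by linarith))]
  simp [Real.zero_rpow hσ.ne']

end RpowIntegrals

lemma RLint_eq_setIntegral {a σ x : ℝ} (u : ℝ → ℝ) (hax : a ≤ x) :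
    RLint a σ u x = (Real.Gamma σ)⁻¹ * ∫ t in Ioo a x, u t * (x - t) ^ (σ - 1) := by
  rw [RLint, intervalIntegral.integral_of_le hax, integral_Ioc_eq_integral_Ioo]

section Triangle

variable {a x C : ℝ} {f : ℝ → ℝ} {k : ℝ → ℝ → ℝ}

noncomputable def triangleIntegrand (f : ℝ → ℝ) (k : ℝ → ℝ → ℝ) : ℝ × ℝ → ℝ :=
  {p | p.1 < p.2}.indicator fun p => f p.1 * k p.2 p.1

lemma volume_restrict_Ioo_prod (a x : ℝ) :
    volume.restrict (Ioo a x ×ˢ Ioo a x) =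
      (volume.restrict (Ioo a x)).prod (volume.restrict (Ioo a x)) := by
  rw [Measure.volume_eq_prod ℝ ℝ, Measure.prod_restrict]

lemma triangleIntegrand_row (r : ℝ) :
    (fun t => triangleIntegrand f k (r, t)) = (Ioi r).indicator fun t => f r * k t r := by
  ext t
  simp [triangleIntegrand, indicator]

lemma triangleIntegrand_col (t : ℝ) :
    (fun r => triangleIntegrand f k (r, t)) = (Iio t).indicator fun r => f r * k t r := by
  ext r
  simp [triangleIntegrand, indicator]

lemma restrict_Ioo_restrict_Ioi {r : ℝ} (hr : a ≤ r) :
    (volume.restrict (Ioo a x)).restrict (Ioi r) = volume.restrict (Ioo r x) := by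
  rw [Measure.restrict_restrict measurableSet_Ioi, Ioi_inter_Ioo, max_eq_left hr]

lemma setIntegral_triangleIntegrand_row {r : ℝ} (hr : r ∈ Ioo a x) :
    ∫ t in Ioo a x, triangleIntegrand f k (r, t) = f r * ∫ t in Ioo r x, k t r := by
  rw [triangleIntegrand_row, integral_indicator measurableSet_Ioi,
    restrict_Ioo_restrict_Ioi hr.1.le, integral_const_mul]

lemma setIntegral_triangleIntegrand_col {t : ℝ} (ht : t ∈ Ioo a x) :
    ∫ r in Ioo a x, triangleIntegrand f k (r, t) = ∫ r in Ioo a t, f r * k t r := by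
  rw [triangleIntegrand_col, integral_indicator measurableSet_Iio,
    Measure.restrict_restrict measurableSet_Iio, Iio_inter_Ioo, min_eq_left ht.2.le]

lemma integrableOn_triangleIntegrand (hf : IntegrableOn f (Ioo a x))
    (hk : AEStronglyMeasurable (Function.uncurry k) (volume.restrict (Ioo a x ×ˢ Ioo a x)))
    (hki : ∀ r ∈ Ioo a x, IntegrableOn (fun t => k t r) (Ioo r x))
    (hkC : ∀ r ∈ Ioo a x, ∫ t in Ioo r x, |k t r| ≤ C) :
    IntegrableOn (triangleIntegrand f k) (Ioo a x ×ˢ Ioo a x) := by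
  rw [volume_restrict_Ioo_prod] at hk
  rw [IntegrableOn, volume_restrict_Ioo_prod]
  have hm : AEStronglyMeasurable (triangleIntegrand f k)
      ((volume.restrict (Ioo a x)).prod (volume.restrict (Ioo a x))) :=
    (hf.aestronglyMeasurable.comp_fst.mul hk.prod_swap).indicator
      (measurableSet_lt measurable_fst measurable_snd)
  have hnorm : ∀ p, ‖triangleIntegrand f k p‖ = triangleIntegrand (|f ·|) (|k · ·|) p := by
    intro p
    by_cases h : p.1 < p.2 <;> simp [triangleIntegrand, h]
  refine (integrable_prod_iff hm).2 ⟨?_, ?_⟩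
  · filter_upwards [ae_restrict_mem measurableSet_Ioo] with r hr
    rw [triangleIntegrand_row, integrable_indicator_iff measurableSet_Ioi, IntegrableOn,
      restrict_Ioo_restrict_Ioi hr.1.le]
    exact (hki r hr).const_mul (f r)
  · refine Integrable.mono' (hf.norm.mul_const C) hm.norm.integral_prod_right' ?_
    filter_upwards [ae_restrict_mem measurableSet_Ioo] with r hr
    rw [Real.norm_of_nonneg (integral_nonneg fun _ => norm_nonneg _)]
    simp only [hnorm, setIntegral_triangleIntegrand_row hr, Real.norm_eq_abs]
    exact mul_le_mul_of_nonneg_left (hkC r hr) (abs_nonneg _)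

lemma integrableOn_setIntegral_triangle
    (hF : IntegrableOn (triangleIntegrand f k) (Ioo a x ×ˢ Ioo a x)) :
    IntegrableOn (fun t => ∫ r in Ioo a t, f r * k t r) (Ioo a x) := by
  rw [IntegrableOn, volume_restrict_Ioo_prod] at hF
  refine hF.integral_prod_right.congr ?_
  filter_upwards [ae_restrict_mem measurableSet_Ioo] with t ht
  exact setIntegral_triangleIntegrand_col ht

lemma integrableOn_mul_setIntegral_triangle
    (hF : IntegrableOn (triangleIntegrand f k) (Ioo a x ×ˢ Ioo a x)) :
    IntegrableOn (fun r => f r * ∫ t in Ioo r x, k t r) (Ioo a x) := by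
  rw [IntegrableOn, volume_restrict_Ioo_prod] at hF
  refine hF.integral_prod_left.congr ?_
  filter_upwards [ae_restrict_mem measurableSet_Ioo] with r hr
  exact setIntegral_triangleIntegrand_row hr

lemma setIntegral_triangle_swap (hF : IntegrableOn (triangleIntegrand f k) (Ioo a x ×ˢ Ioo a x)) :
    ∫ t in Ioo a x, ∫ r in Ioo a t, f r * k t r = ∫ r in Ioo a x, f r * ∫ t in Ioo r x, k t r := by
  rw [IntegrableOn, volume_restrict_Ioo_prod] at hF
  calc ∫ t in Ioo a x, ∫ r in Ioo a t, f r * k t r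
      = ∫ t in Ioo a x, ∫ r in Ioo a x, triangleIntegrand f k (r, t) :=
        setIntegral_congr_fun measurableSet_Ioo fun t ht =>
          (setIntegral_triangleIntegrand_col ht).symm
    _ = ∫ r in Ioo a x, ∫ t in Ioo a x, triangleIntegrand f k (r, t) :=
        (integral_integral_swap (f := fun r t => triangleIntegrand f k (r, t)) hF).symm
    _ = ∫ r in Ioo a x, f r * ∫ t in Ioo r x, k t r :=
        setIntegral_congr_fun measurableSet_Ioo fun r hr => setIntegral_triangleIntegrand_row hr

end Triangle

section Kernels

variable {a x σ M : ℝ} {f φ : ℝ → ℝ}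

lemma setIntegral_abs_mul_sub_rpow_le (hσ : 0 < σ) {r : ℝ} (hrx : r ≤ x)
    (hφM : ∀ t ∈ Ioo r x, |φ t| ≤ M) :
    ∫ t in Ioo r x, |φ t * (t - r) ^ (σ - 1)| ≤ M * ((x - r) ^ σ / σ) := by
  rw [← setIntegral_sub_rpow hrx hσ, ← integral_const_mul]
  refine integral_mono_of_nonneg (.of_forall fun _ => abs_nonneg _)
    ((integrableOn_sub_rpow (by linarith)).const_mul M) ?_
  filter_upwards [ae_restrict_mem measurableSet_Ioo] with t ht
  have hk : 0 ≤ (t - r) ^ (σ - 1) := Real.rpow_nonneg (sub_nonneg.2 ht.1.le) _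
  rw [abs_mul, abs_of_nonneg hk]
  exact mul_le_mul_of_nonneg_right (hφM t ht) hk

lemma integrableOn_triangleIntegrand_mul_sub_rpow (hσ : 0 < σ) (hf : IntegrableOn f (Ioo a x))
    (hφm : AEStronglyMeasurable φ (volume.restrict (Ioo a x)))
    (hφM : ∀ t ∈ Ioo a x, |φ t| ≤ M) :
    IntegrableOn (triangleIntegrand f fun t r => φ t * (t - r) ^ (σ - 1)) (Ioo a x ×ˢ Ioo a x) := by
  have hk : AEStronglyMeasurable (fun p : ℝ × ℝ => φ p.1 * (p.1 - p.2) ^ (σ - 1))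
      (volume.restrict (Ioo a x ×ˢ Ioo a x)) := by
    rw [volume_restrict_Ioo_prod]
    exact hφm.comp_fst.mul
      (by fun_prop : Measurable fun p : ℝ × ℝ => (p.1 - p.2) ^ (σ - 1)).aestronglyMeasurable
  refine integrableOn_triangleIntegrand (C := M * ((x - a) ^ σ / σ)) hf hk
    (fun r hr => ?_) (fun r hr => ?_)
  · have hφr : ∀ t ∈ Ioo r x, |φ t| ≤ M := fun t ht => hφM t ⟨hr.1.trans ht.1, ht.2⟩
    exact (integrableOn_sub_rpow (by linarith)).bdd_mul
      (hφm.mono_measure (Measure.restrict_mono (Ioo_subset_Ioo_left hr.1.le) le_rfl))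
      (ae_restrict_of_forall_mem measurableSet_Ioo hφr)
  · have hM : 0 ≤ M := (abs_nonneg _).trans (hφM r hr)
    refine (setIntegral_abs_mul_sub_rpow_le hσ hr.2.le fun t ht =>
      hφM t ⟨hr.1.trans ht.1, ht.2⟩).trans ?_
    gcongr <;> linarith [hr.1, hr.2]

lemma integrableOn_triangleIntegrand_sub_rpow (hσ : 0 < σ) (hf : IntegrableOn f (Ioo a x)) :
    IntegrableOn (triangleIntegrand f fun t r => (t - r) ^ (σ - 1)) (Ioo a x ×ˢ Ioo a x) := by
  simpa using integrableOn_triangleIntegrand_mul_sub_rpow (φ := fun _ => 1) (M := 1) hσ hf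
    aestronglyMeasurable_const (by simp)

lemma integrableOn_triangleIntegrand_rpow_sub (hσ : 0 < σ) (hf : IntegrableOn f (Ioo a x)) :
    IntegrableOn (triangleIntegrand f fun t _ => (x - t) ^ (σ - 1)) (Ioo a x ×ˢ Ioo a x) := by
  refine integrableOn_triangleIntegrand (C := (x - a) ^ σ / σ) hf
    (by fun_prop : Measurable fun p : ℝ × ℝ => (x - p.1) ^ (σ - 1)).aestronglyMeasurable
    (fun r _ => integrableOn_rpow_sub (by linarith)) (fun r hr => ?_)
  rw [setIntegral_congr_fun measurableSet_Ioo fun t ht =>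
    abs_of_nonneg (Real.rpow_nonneg (sub_nonneg.2 ht.2.le) _), setIntegral_rpow_sub hr.2.le hσ]
  gcongr <;> linarith [hr.1, hr.2]

end Kernels

section Semigroup

variable {a x σ : ℝ} {g : ℝ → ℝ}

lemma RLint_add_one (hσ : 0 < σ) (hax : a ≤ x) :
    RLint a (σ + 1) g x = (Real.Gamma σ)⁻¹ * ∫ r in Ioo a x, g r * ((x - r) ^ σ / σ) := by
  rw [RLint_eq_setIntegral g hax, Real.Gamma_add_one hσ.ne', add_sub_cancel_right, mul_inv,
    mul_comm σ⁻¹, mul_assoc, ← integral_const_mul]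
  congr 2 with r
  ring

lemma integral_RLint (hσ : 0 < σ) (hax : a ≤ x) (hg : IntegrableOn g (Ioo a x)) :
    ∫ t in a..x, RLint a σ g t = RLint a (σ + 1) g x := by
  have hF := integrableOn_triangleIntegrand_sub_rpow hσ hg
  calc ∫ t in a..x, RLint a σ g t
      = ∫ t in Ioo a x, (Real.Gamma σ)⁻¹ * ∫ r in Ioo a t, g r * (t - r) ^ (σ - 1) := by
        rw [intervalIntegral.integral_of_le hax, integral_Ioc_eq_integral_Ioo]
        exact setIntegral_congr_fun measurableSet_Ioo fun t ht => RLint_eq_setIntegral g ht.1.le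
    _ = (Real.Gamma σ)⁻¹ * ∫ r in Ioo a x, g r * ∫ t in Ioo r x, (t - r) ^ (σ - 1) := by
        rw [integral_const_mul, setIntegral_triangle_swap hF]
    _ = RLint a (σ + 1) g x := by
        rw [RLint_add_one hσ hax]
        congr 1
        exact setIntegral_congr_fun measurableSet_Ioo fun r hr => by
          rw [setIntegral_sub_rpow hr.2.le hσ]

lemma RLint_primitive (hσ : 0 < σ) (hax : a ≤ x) (hg : IntegrableOn g (Ioo a x)) :
    RLint a σ (fun y => ∫ t in a..y, g t) x = RLint a (σ + 1) g x := by
  have hF := integrableOn_triangleIntegrand_rpow_sub hσ hg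
  calc RLint a σ (fun y => ∫ t in a..y, g t) x
      = (Real.Gamma σ)⁻¹ * ∫ t in Ioo a x, ∫ r in Ioo a t, g r * (x - t) ^ (σ - 1) := by
        rw [RLint_eq_setIntegral _ hax]
        congr 1
        refine setIntegral_congr_fun measurableSet_Ioo fun t ht => ?_
        rw [intervalIntegral.integral_of_le ht.1.le, integral_Ioc_eq_integral_Ioo,
          integral_mul_const]
    _ = (Real.Gamma σ)⁻¹ * ∫ r in Ioo a x, g r * ∫ t in Ioo r x, (x - t) ^ (σ - 1) := by
        rw [setIntegral_triangle_swap hF]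
    _ = RLint a (σ + 1) g x := by
        rw [RLint_add_one hσ hax]
        congr 1
        exact setIntegral_congr_fun measurableSet_Ioo fun r hr => by
          rw [setIntegral_rpow_sub hr.2.le hσ]

lemma RLint_const (hσ : 0 < σ) (hax : a ≤ x) (c : ℝ) :
    RLint a σ (fun _ => c) x = c * (x - a) ^ σ / Real.Gamma (σ + 1) := by
  rw [RLint_eq_setIntegral _ hax, integral_const_mul, setIntegral_rpow_sub hax hσ,
    Real.Gamma_add_one hσ.ne']
  field_simp

lemma RLint_add {u v : ℝ → ℝ}
    (hu : IntervalIntegrable (fun t => u t * (x - t) ^ (σ - 1)) volume a x)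
    (hv : IntervalIntegrable (fun t => v t * (x - t) ^ (σ - 1)) volume a x) :
    RLint a σ (fun t => u t + v t) x = RLint a σ u x + RLint a σ v x := by
  simp only [RLint, add_mul, intervalIntegral.integral_add hu hv, mul_add]

lemma RLint_const_add_primitive (hσ : 0 < σ) (hax : a ≤ x) (hg : IntegrableOn g (Ioo a x))
    (c : ℝ) :
    RLint a σ (fun y => c + ∫ t in a..y, g t) x
      = c * (x - a) ^ σ / Real.Gamma (σ + 1) + ∫ t in a..x, RLint a σ g t := by
  have hk : IntervalIntegrable (fun t => (x - t) ^ (σ - 1)) volume a x :=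
    (intervalIntegrable_iff_integrableOn_Ioo_of_le hax).2 (integrableOn_rpow_sub (by linarith))
  have hG : ContinuousOn (fun y => ∫ t in a..y, g t) (uIcc a x) :=
    intervalIntegral.continuousOn_primitive_interval
      (by rwa [uIcc_of_le hax, integrableOn_Icc_iff_integrableOn_Ioo])
  rw [RLint_add (hk.const_mul c) (hk.continuousOn_mul hG), RLint_const hσ hax,
    RLint_primitive hσ hax hg, integral_RLint hσ hax hg]

end Semigroup

section Derivative

variable {a b σ : ℝ} {g : ℝ → ℝ}

lemma integrableOn_RLint (hσ : 0 < σ) (hg : IntegrableOn g (Ioo a b)) :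
    IntegrableOn (RLint a σ g) (Ioo a b) :=
  IntegrableOn.congr_fun
    ((integrableOn_setIntegral_triangle (integrableOn_triangleIntegrand_sub_rpow hσ hg)).const_mul
      (Real.Gamma σ)⁻¹)
    (fun _ ht => (RLint_eq_setIntegral g ht.1.le).symm) measurableSet_Ioo

lemma ae_hasDerivAt_RLint_const_add_primitive (hσ : 0 < σ) (hab : a ≤ b)
    (hg : IntegrableOn g (Ioo a b)) (c : ℝ) :
    ∀ᵐ x ∂(volume.restrict (Ioo a b)), HasDerivAt (RLint a σ fun y => c + ∫ t in a..y, g t)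
      (c * (x - a) ^ (σ - 1) / Real.Gamma σ + RLint a σ g x) x := by
  have hI : IntervalIntegrable (RLint a σ g) volume a b :=
    (intervalIntegrable_iff_integrableOn_Ioo_of_le hab).2 (integrableOn_RLint hσ hg)
  filter_upwards [ae_restrict_of_ae hI.ae_hasDerivAt_integral,
    ae_restrict_mem measurableSet_Ioo] with x hderiv hx
  have hloc : (RLint a σ fun y => c + ∫ t in a..y, g t) =ᶠ[𝓝 x]
      fun y => c * (y - a) ^ σ / Real.Gamma (σ + 1) + ∫ t in a..y, RLint a σ g t :=
    eventually_of_mem (Ioo_mem_nhds hx.1 hx.2) fun y hy =>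
      RLint_const_add_primitive hσ hy.1.le (hg.mono_set (Ioo_subset_Ioo_right hy.2.le)) c
  have hpow : HasDerivAt (fun y => c * (y - a) ^ σ / Real.Gamma (σ + 1))
      (c * (x - a) ^ (σ - 1) / Real.Gamma σ) x := by
    refine ((((hasDerivAt_id x).sub_const a).rpow_const (Or.inl (sub_pos.2 hx.1).ne')).const_mul
      c).div_const (Real.Gamma (σ + 1)) |>.congr_deriv ?_
    rw [Real.Gamma_add_one hσ.ne']
    field_simp
    simp
  have hx' : x ∈ uIcc a b := by rw [uIcc_of_le hab]; exact Ioo_subset_Icc_self hx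
  exact (hpow.add (hderiv hx' a left_mem_uIcc)).congr_of_eventuallyEq hloc

end Derivative

section IntegrationByParts

variable {a b σ M : ℝ} {g φ : ℝ → ℝ}

lemma setIntegral_mul_RLint (hσ : 0 < σ) (hg : IntegrableOn g (Ioo a b))
    (hφm : AEStronglyMeasurable φ (volume.restrict (Ioo a b))) (hφM : ∀ x ∈ Ioo a b, |φ x| ≤ M) :
    ∫ x in Ioo a b, φ x * RLint a σ g x = ∫ r in Ioo a b, g r * RLintRight b σ φ r := by
  have hF := integrableOn_triangleIntegrand_mul_sub_rpow hσ hg hφm hφM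
  calc ∫ x in Ioo a b, φ x * RLint a σ g x
      = (Real.Gamma σ)⁻¹ * ∫ t in Ioo a b, ∫ r in Ioo a t, g r * (φ t * (t - r) ^ (σ - 1)) := by
        rw [← integral_const_mul]
        refine setIntegral_congr_fun measurableSet_Ioo fun t ht => ?_
        rw [RLint_eq_setIntegral g ht.1.le, mul_left_comm, ← integral_const_mul]
        congr 2 with r
        ring
    _ = (Real.Gamma σ)⁻¹ * ∫ r in Ioo a b, g r * ∫ t in Ioo r b, φ t * (t - r) ^ (σ - 1) := by
        rw [setIntegral_triangle_swap hF]
    _ = ∫ r in Ioo a b, g r * RLintRight b σ φ r := by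
        rw [← integral_const_mul]
        congr 1 with r
        rw [RLintRight]
        ring

lemma integrableOn_mul_RLintRight (hσ : 0 < σ) (hg : IntegrableOn g (Ioo a b))
    (hφm : AEStronglyMeasurable φ (volume.restrict (Ioo a b))) (hφM : ∀ x ∈ Ioo a b, |φ x| ≤ M) :
    IntegrableOn (fun r => g r * RLintRight b σ φ r) (Ioo a b) :=
  IntegrableOn.congr_fun
    ((integrableOn_mul_setIntegral_triangle
      (integrableOn_triangleIntegrand_mul_sub_rpow hσ hg hφm hφM)).const_mul (Real.Gamma σ)⁻¹)
    (fun r _ => by rw [RLintRight]; ring) measurableSet_Ioo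

lemma setIntegral_mul_rpow_add_RLint (hσ : 0 < σ) (hg : IntegrableOn g (Ioo a b))
    (hφm : AEStronglyMeasurable φ (volume.restrict (Ioo a b))) (hφM : ∀ x ∈ Ioo a b, |φ x| ≤ M)
    (c : ℝ) :
    ∫ x in Ioo a b, φ x * (c * (x - a) ^ (σ - 1) / Real.Gamma σ + RLint a σ g x)
      = c * RLintRight b σ φ a + ∫ r in Ioo a b, g r * RLintRight b σ φ r := by
  have hφb : ∀ᵐ x ∂(volume.restrict (Ioo a b)), ‖φ x‖ ≤ M :=
    ae_restrict_of_forall_mem measurableSet_Ioo hφM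
  have h1 : IntegrableOn (fun x => φ x * (c * (x - a) ^ (σ - 1) / Real.Gamma σ)) (Ioo a b) :=
    (((integrableOn_sub_rpow (by linarith)).const_mul c).div_const _).bdd_mul hφm hφb
  have h2 : IntegrableOn (fun x => φ x * RLint a σ g x) (Ioo a b) :=
    (integrableOn_RLint hσ hg).bdd_mul hφm hφb
  simp_rw [mul_add]
  rw [integral_add h1 h2, setIntegral_mul_RLint hσ hg hφm hφM, RLintRight, ← integral_const_mul,
    ← integral_const_mul]
  congr 1
  exact setIntegral_congr_fun measurableSet_Ioo fun x _ => by ring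

end IntegrationByParts

lemma tendsto_inv_Gamma_add_one : Tendsto (fun σ : ℝ => (Real.Gamma (σ + 1))⁻¹) (𝓝 0) (𝓝 1) := by
  have hΓ : ContinuousAt Real.Gamma (0 + 1) :=
    (Real.differentiableAt_Gamma fun m => by linarith [m.cast_nonneg (α := ℝ)]).continuousAt
  have h := (hΓ.tendsto.comp ((continuous_add_const (1 : ℝ)).tendsto 0)).inv₀
    (by simp [Real.Gamma_one])
  simpa [Function.comp_def, Real.Gamma_one] using h

section RLintRight

variable {b r σ M : ℝ} {φ : ℝ → ℝ}

lemma abs_RLintRight_le (hσ : 0 < σ) (hrb : r ≤ b)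
    (hφM : ∀ x ∈ Ioo r b, |φ x| ≤ M) :
    |RLintRight b σ φ r| ≤ M * (b - r) ^ σ / Real.Gamma (σ + 1) := by
  have hΓ := Real.Gamma_pos_of_pos hσ
  rw [RLintRight, abs_mul, abs_of_pos (inv_pos.2 hΓ), Real.Gamma_add_one hσ.ne']
  calc (Real.Gamma σ)⁻¹ * |∫ t in Ioo r b, φ t * (t - r) ^ (σ - 1)|
      ≤ (Real.Gamma σ)⁻¹ * (M * ((b - r) ^ σ / σ)) := by
        gcongr
        exact abs_integral_le_integral_abs.trans (setIntegral_abs_mul_sub_rpow_le hσ hrb hφM)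
    _ = M * (b - r) ^ σ / (σ * Real.Gamma σ) := by field_simp

lemma tendstoUniformlyOn_mul_sub_rpow {δ : ℝ} (hδ : 0 < δ) :
    TendstoUniformlyOn (fun σ x => σ * (x - r) ^ (σ - 1)) 0 (𝓝[>] 0) (Ici (r + δ)) := by
  rw [Metric.tendstoUniformlyOn_iff]
  intro ε hε
  have hlim : Tendsto (fun σ : ℝ => σ * δ ^ (σ - 1)) (𝓝[>] 0) (𝓝 0) := by
    have : ContinuousAt (fun σ : ℝ => σ * δ ^ (σ - 1)) 0 :=
      continuousAt_id.mul ((Real.continuousAt_const_rpow hδ.ne').comp (continuousAt_id.sub_const 1))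
    simpa using this.tendsto.mono_left nhdsWithin_le_nhds
  filter_upwards [hlim (Iio_mem_nhds hε), Ioo_mem_nhdsGT one_pos] with σ hσε hσ x hx
  have hxr : δ ≤ x - r := by linarith [mem_Ici.1 hx]
  rw [Pi.zero_apply, dist_zero_left,
    Real.norm_of_nonneg (mul_nonneg hσ.1.le (Real.rpow_nonneg (by linarith) _))]
  calc σ * (x - r) ^ (σ - 1) ≤ σ * δ ^ (σ - 1) :=
        mul_le_mul_of_nonneg_left (Real.rpow_le_rpow_of_nonpos hδ hxr (by linarith [hσ.2])) hσ.1.le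
    _ < ε := hσε

lemma tendsto_setIntegral_mul_sub_rpow_mul (hrb : r < b)
    (hφ : ContinuousOn φ (Icc r b)) :
    Tendsto (fun σ => ∫ x in Ioo r b, σ * (x - r) ^ (σ - 1) * φ x) (𝓝[>] 0) (𝓝 (φ r)) := by
  have hmass : Tendsto (fun σ : ℝ => ∫ x in Ioo r b, σ * (x - r) ^ (σ - 1)) (𝓝[>] 0) (𝓝 1) := by
    have h : Tendsto (fun σ : ℝ => (b - r) ^ σ) (𝓝[>] 0) (𝓝 1) := by
      simpa using ((Real.continuousAt_const_rpow (sub_pos.2 hrb).ne').tendsto (x := 0)).mono_left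
        nhdsWithin_le_nhds
    refine h.congr' ?_
    filter_upwards [self_mem_nhdsWithin] with σ (hσ : 0 < σ)
    rw [integral_const_mul, setIntegral_sub_rpow hrb.le hσ]
    field_simp
  have hpeak : ∀ u : Set ℝ, IsOpen u → r ∈ u →
      TendstoUniformlyOn (fun σ x => σ * (x - r) ^ (σ - 1)) 0 (𝓝[>] 0) (Ioo r b \ u) := by
    intro u hu hru
    obtain ⟨δ, hδ, hball⟩ := Metric.isOpen_iff.1 hu r hru
    refine (tendstoUniformlyOn_mul_sub_rpow hδ).mono fun x hx => ?_
    by_contra h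
    exact hx.2 (hball (by
      rw [Metric.mem_ball, Real.dist_eq, abs_lt]
      constructor <;> linarith [hx.1.1, not_le.1 (mt mem_Ici.2 h)]))
  simpa using tendsto_setIntegral_peak_smul_of_integrableOn_of_tendsto (μ := volume)
    (φ := fun σ x => σ * (x - r) ^ (σ - 1)) measurableSet_Ioo measurableSet_Ioo subset_rfl
    self_mem_nhdsWithin measure_Ioo_lt_top.ne
    (by
      filter_upwards [self_mem_nhdsWithin] with σ (hσ : 0 < σ) x hx
      exact mul_nonneg hσ.le (Real.rpow_nonneg (sub_nonneg.2 hx.1.le) _))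
    hpeak hmass
    (.of_forall fun σ =>
      (by fun_prop : Measurable fun x : ℝ => σ * (x - r) ^ (σ - 1)).aestronglyMeasurable)
    (hφ.integrableOn_Icc.mono_set Ioo_subset_Icc_self)
    ((hφ r (left_mem_Icc.2 hrb.le)).mono Ioo_subset_Icc_self)

lemma tendsto_RLintRight (hrb : r < b) (hφ : ContinuousOn φ (Icc r b)) :
    Tendsto (fun σ => RLintRight b σ φ r) (𝓝[>] 0) (𝓝 (φ r)) := by
  have h := (tendsto_inv_Gamma_add_one.mono_left nhdsWithin_le_nhds).mul
    (tendsto_setIntegral_mul_sub_rpow_mul hrb hφ)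
  rw [one_mul] at h
  refine h.congr' ?_
  filter_upwards [self_mem_nhdsWithin] with σ (hσ : 0 < σ)
  rw [RLintRight, Real.Gamma_add_one hσ.ne', ← integral_const_mul, ← integral_const_mul]
  congr 1 with x
  field_simp

end RLintRight

lemma tendsto_setIntegral_mul_RLintRight {a b : ℝ} {g φ : ℝ → ℝ} (hab : a < b)
    (hg : IntegrableOn g (Ioo a b)) (hφ : ContinuousOn φ (Icc a b)) :
    Tendsto (fun σ => ∫ r in Ioo a b, g r * RLintRight b σ φ r) (𝓝[>] 0)
      (𝓝 (∫ r in Ioo a b, g r * φ r)) := by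
  obtain ⟨M, hM⟩ := isCompact_Icc.exists_bound_of_continuousOn hφ
  have hφM : ∀ x ∈ Ioo a b, |φ x| ≤ M := fun x hx => hM x (Ioo_subset_Icc_self hx)
  have hφm : AEStronglyMeasurable φ (volume.restrict (Ioo a b)) :=
    (hφ.mono Ioo_subset_Icc_self).aestronglyMeasurable measurableSet_Ioo
  have hB : Tendsto (fun σ : ℝ => (b - a) ^ σ * (Real.Gamma (σ + 1))⁻¹) (𝓝[>] 0) (𝓝 1) := by
    simpa using (((Real.continuousAt_const_rpow (sub_pos.2 hab).ne').tendsto (x := 0)).mul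
      tendsto_inv_Gamma_add_one).mono_left nhdsWithin_le_nhds
  refine tendsto_integral_filter_of_dominated_convergence (fun r => ‖g r‖ * (2 * M)) ?_ ?_
    (hg.norm.mul_const _) ?_
  · filter_upwards [self_mem_nhdsWithin] with σ (hσ : 0 < σ)
    exact (integrableOn_mul_RLintRight hσ hg hφm hφM).aestronglyMeasurable
  · filter_upwards [self_mem_nhdsWithin, hB.eventually (eventually_le_nhds one_lt_two)]
      with σ (hσ : 0 < σ) hσB
    filter_upwards [ae_restrict_mem measurableSet_Ioo] with r hr
    have hM0 : 0 ≤ M := (abs_nonneg _).trans (hφM r hr)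
    have hΓ : 0 < Real.Gamma (σ + 1) := Real.Gamma_pos_of_pos (by linarith)
    rw [norm_mul]
    gcongr
    calc ‖RLintRight b σ φ r‖ ≤ M * (b - r) ^ σ / Real.Gamma (σ + 1) :=
          abs_RLintRight_le hσ hr.2.le fun x hx => hφM x ⟨hr.1.trans hx.1, hx.2⟩
      _ ≤ M * ((b - a) ^ σ * (Real.Gamma (σ + 1))⁻¹) := by
          rw [mul_div_assoc, div_eq_mul_inv]
          gcongr <;> linarith [hr.1, hr.2]
      _ ≤ 2 * M := by nlinarith
  · filter_upwards [ae_restrict_mem measurableSet_Ioo] with r hr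
    exact (tendsto_RLintRight hr.2 (hφ.mono (Icc_subset_Icc_left hr.1.le))).const_mul (g r)

/-- for `u(x) = c + ∫_a^x g`, `D_{a+}^s u` converges weakly-* (as Radon
measures on `[a,b]`) to `u'·dx + u(a)·δ_a` as `s → 1-`. -/
theorem rl_deriv_weak_star_W11 (a b : ℝ) (hab : a < b) (c : ℝ)
    (g : ℝ → ℝ) (hg : IntegrableOn g (Set.Ioo a b)) :
    (∀ s ∈ Set.Ioo (0:ℝ) 1, ∀ᵐ x ∂(volume.restrict (Set.Ioo a b)),
      HasDerivAt (RLint a (1 - s) (fun y => c + ∫ t in a..y, g t))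
        (c * (x - a) ^ (-s) / Real.Gamma (1 - s) + RLint a (1 - s) g x) x) ∧
    (∀ φ : ℝ → ℝ, ContinuousOn φ (Set.Icc a b) →
      Filter.Tendsto
        (fun s : ℝ => ∫ x in Set.Ioo a b,
          φ x * (c * (x - a) ^ (-s) / Real.Gamma (1 - s) + RLint a (1 - s) g x))
        (nhdsWithin 1 (Set.Iio 1))
        (nhds ((∫ x in Set.Ioo a b, φ x * g x) + c * φ a))) := by
  refine ⟨fun s hs => ?_, fun φ hφ => ?_⟩
  · simpa only [sub_sub_cancel_left] using
      ae_hasDerivAt_RLint_const_add_primitive (sub_pos.2 hs.2) hab.le hg c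
  obtain ⟨M, hM⟩ := isCompact_Icc.exists_bound_of_continuousOn hφ
  have hident : ∀ s ∈ Ioo (0 : ℝ) 1,
      ∫ x in Ioo a b, φ x * (c * (x - a) ^ (-s) / Real.Gamma (1 - s) + RLint a (1 - s) g x)
        = c * RLintRight b (1 - s) φ a + ∫ r in Ioo a b, g r * RLintRight b (1 - s) φ r :=
    fun s hs => by
      simpa only [sub_sub_cancel_left] using setIntegral_mul_rpow_add_RLint (sub_pos.2 hs.2) hg
        ((hφ.mono Ioo_subset_Icc_self).aestronglyMeasurable measurableSet_Ioo)
        (fun x hx => hM x (Ioo_subset_Icc_self hx)) c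
  have hmap : Tendsto (fun s : ℝ => 1 - s) (𝓝[<] 1) (𝓝[>] 0) :=
    tendsto_nhdsWithin_of_tendsto_nhds_of_eventually_within _
      (((continuous_sub_left 1).tendsto' 1 0 (sub_self 1)).mono_left nhdsWithin_le_nhds)
      (eventually_nhdsWithin_of_forall fun s (hs : s < 1) => sub_pos.2 hs)
  have hlim := ((tendsto_RLintRight hab hφ).const_mul c).add
    (tendsto_setIntegral_mul_RLintRight hab hg hφ)
  rw [add_comm, show ∫ x in Ioo a b, φ x * g x = ∫ r in Ioo a b, g r * φ r by simp_rw [mul_comm]]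
  exact (hlim.comp hmap).congr'
    (eventually_of_mem (Ioo_mem_nhdsLT one_pos) fun s hs => (hident s hs).symm)
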